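/- Let n ≥ 1 and κ ≥ 1 be integers, with κ ≥ 2 if p = 2, and set λ = κ + ⌊log_p n⌋. Let g, ḡ, h ∈ ℤ_p⟦t⟧ with h having constant term 1, and suppose the coefficient of t^i in Y(g) lies in ℤ_p for all 0 ≤ i ≤ n. If the coefficient of t^i in ḡ - g lies in p^λℤ_p for all i < n, and the coefficients of t^i in ḡ and g agree for all i ≥ n, then Y(ḡ) ≡ Y(g) (mod (p^κ, t^{n+1})), i.e. the coefficient of t^i in Y(ḡ) - Y(g) lies in p^κℤ_p for all 0 ≤ i ≤ n. -/

import Mathlib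

/-!
The equation `y' = g · h(y)` separates: with `Φ = ∫ h⁻¹` the chain rule gives `Φ(Y(g)) = ∫ g`, so
`Φ(Y(ḡ)) - Φ(Y(g)) = ∫ (ḡ - g)`. Integration divides the coefficient of `t^(i-1)` by `i ≤ n`,
which costs at most `⌊log_p n⌋` powers of `p`, so the right side is `0` modulo `(p^κ, t^(n+1))`.
With `e = Y(ḡ) - Y(g)`, Taylor expansion of (a truncation of) `Φ` around `Y(g)` writes the left
side as `∑_{k ≥ 1} T_k e^k`, where `k T_k` is the `(k-1)`-st Hasse derivative of `Φ' = h⁻¹` at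
`Y(g)`, hence integral up to `t^n`, and `T_1 ≡ 1` modulo `t`. By induction on `i`, the
coefficient of `t^i` in `e` is `0` modulo `p^κ`: it differs from that of the left side by terms
involving only lower coefficients of `e`, each of size at most `|k|_p⁻¹ p^(-kκ) ≤ p^(-κ)` since
`v_p(k) ≤ (k - 1)κ`.
-/

open PowerSeries

/-- Composition `h(u)` of formal power series, intended for `u` with zero constant term. -/
noncomputable def pcomp {R : Type*} [CommSemiring R] (h u : R⟦X⟧) : R⟦X⟧ :=
  PowerSeries.mk fun n => ∑ i ∈ Finset.range (n + 1), coeff i h * coeff n (u ^ i)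

/-- Formal integral: the unique `F` with `F' = f` and `F(0) = 0`. -/
noncomputable def pint {K : Type*} [Field K] (f : K⟦X⟧) : K⟦X⟧ :=
  PowerSeries.mk fun n => if n = 0 then 0 else coeff (n - 1) f / (n : K)

open Finset
open scoped Polynomial

section Composition

variable {R : Type*} [CommRing R]

lemma pcomp_eq_subst (f : R⟦X⟧) {u : R⟦X⟧} (hu : constantCoeff u = 0) :
    pcomp f u = f.subst u := by
  ext n
  rw [coeff_subst' (HasSubst.of_constantCoeff_zero' hu),
    finsum_eq_sum_of_support_subset (s := range (n + 1))]
  · simp [pcomp, smul_eq_mul]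
  · intro d hd
    rw [coe_range, Set.mem_Iio]
    by_contra hdn
    refine hd ?_
    change coeff d f • coeff n (u ^ d) = 0
    rw [X_pow_dvd_iff.mp (pow_dvd_pow_of_dvd (X_dvd_iff.mpr hu) d) n (by omega), smul_zero]

lemma coeff_subst_eq_coeff_aeval_trunc (f : R⟦X⟧) {z : R⟦X⟧} (hz : constantCoeff z = 0)
    {i N : ℕ} (hi : i < N) :
    coeff i (f.subst z) = coeff i (Polynomial.aeval z (trunc N f)) := by
  have hz' := HasSubst.of_constantCoeff_zero' hz
  have hX : X ^ N ∣ z ^ N * (mk fun k => coeff (k + N) f).subst z :=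
    (pow_dvd_pow_of_dvd (X_dvd_iff.mpr hz) N).mul_right _
  conv_lhs => rw [eq_X_pow_mul_shift_add_trunc N f]
  rw [subst_add hz', subst_mul hz', subst_pow hz', subst_X hz', subst_coe hz', map_add,
    X_pow_dvd_iff.mp hX i hi, zero_add]

lemma constantCoeff_aeval (Q : R[X]) {y : R⟦X⟧}
    (hy : constantCoeff y = 0) : constantCoeff (Polynomial.aeval y Q) = Q.coeff 0 := by
  have hid : constantCoeff.comp (algebraMap R R⟦X⟧) = RingHom.id R := by ext; simp
  rw [Polynomial.aeval_def, Polynomial.hom_eval₂, hy, hid, Polynomial.coeff_zero_eq_eval_zero]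
  rfl

end Composition

section Integral

variable {K : Type*} [Field K]

lemma constantCoeff_pint (f : K⟦X⟧) : constantCoeff (pint f) = 0 := by
  simp [pint]

variable [CharZero K]

lemma derivative_pint (f : K⟦X⟧) : d⁄dX K (pint f) = f := by
  ext n
  rw [coeff_derivative]
  simp only [pint, coeff_mk, Nat.succ_ne_zero, if_false, Nat.add_sub_cancel]
  push_cast
  exact div_mul_cancel₀ _ (Nat.cast_add_one_ne_zero n)

lemma pint_sub (f g : K⟦X⟧) : pint (f - g) = pint f - pint g :=
  derivative.ext (by simp [derivative_pint]) (by simp [constantCoeff_pint])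

theorem subst_pint_inv_eq_pint {g h z : K⟦X⟧} (hh : constantCoeff h ≠ 0)
    (hz0 : constantCoeff z = 0) (hz : d⁄dX K z = g * h.subst z) :
    (pint h⁻¹).subst z = pint g := by
  have hz' := HasSubst.of_constantCoeff_zero' hz0
  refine derivative.ext ?_ ?_
  · rw [derivative_subst hz', derivative_pint, derivative_pint, hz]
    calc h⁻¹.subst z * (g * h.subst z) = g * (h⁻¹ * h).subst z := by rw [subst_mul hz']; ring
      _ = g := by
        rw [PowerSeries.inv_mul_cancel _ hh, ← coe_substAlgHom hz', map_one, mul_one]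
  · rw [constantCoeff_pint]
    exact constantCoeff_subst_eq_zero hz0 _ (constantCoeff_pint _)

end Integral

section Ultrametric

lemma IsUltrametricDist.norm_sub_le_max {S : Type*} [SeminormedAddGroup S] [IsUltrametricDist S]
    (x y : S) : ‖x - y‖ ≤ max ‖x‖ ‖y‖ := by
  simpa [sub_eq_add_neg] using IsUltrametricDist.norm_add_le_max x (-y)

variable {R : Type*} [NormedCommRing R] [IsUltrametricDist R]

lemma norm_coeff_mul_le {f g : R⟦X⟧} {m : ℕ} {a b : ℝ} (hf : ∀ i < m, ‖coeff i f‖ ≤ a)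
    (hg : ∀ i < m, ‖coeff i g‖ ≤ b) : ∀ i < m, ‖coeff i (f * g)‖ ≤ a * b := by
  intro i hi
  have ha : 0 ≤ a := (norm_nonneg _).trans (hf 0 (by omega))
  have hb : 0 ≤ b := (norm_nonneg _).trans (hg 0 (by omega))
  rw [coeff_mul]
  refine IsUltrametricDist.norm_sum_le_of_forall_le_of_nonneg (mul_nonneg ha hb) fun x hx => ?_
  have hx := mem_antidiagonal.mp hx
  exact (norm_mul_le _ _).trans (mul_le_mul (hf _ (by omega)) (hg _ (by omega)) (norm_nonneg _) ha)

lemma norm_coeff_mul_le_of_constantCoeff_eq_zero {f g : R⟦X⟧} {m : ℕ} {a b : ℝ}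
    (ha : 0 ≤ a) (hb : 0 ≤ b) (hf0 : constantCoeff f = 0) (hg0 : constantCoeff g = 0)
    (hf : ∀ i < m, ‖coeff i f‖ ≤ a) (hg : ∀ i < m, ‖coeff i g‖ ≤ b) :
    ∀ i ≤ m, ‖coeff i (f * g)‖ ≤ a * b := by
  intro i hi
  rw [coeff_mul]
  refine IsUltrametricDist.norm_sum_le_of_forall_le_of_nonneg (mul_nonneg ha hb) fun x hx => ?_
  have hx := mem_antidiagonal.mp hx
  obtain h1 | h1 := Nat.eq_zero_or_pos x.1
  · simp [h1, hf0, mul_nonneg ha hb]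
  obtain h2 | h2 := Nat.eq_zero_or_pos x.2
  · simp [h2, hg0, mul_nonneg ha hb]
  exact (norm_mul_le _ _).trans (mul_le_mul (hf _ (by omega)) (hg _ (by omega)) (norm_nonneg _) ha)

variable [NormOneClass R]

lemma norm_coeff_pow_le {f : R⟦X⟧} {m : ℕ} {a : ℝ} (hf : ∀ i < m, ‖coeff i f‖ ≤ a) (k : ℕ) :
    ∀ i < m, ‖coeff i (f ^ k)‖ ≤ a ^ k := by
  induction k with
  | zero => intro i _; rw [pow_zero, pow_zero, coeff_one]; split_ifs <;> simp
  | succ k ih => rw [pow_succ, pow_succ]; exact norm_coeff_mul_le ih hf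

lemma norm_coeff_aeval_le_one {P : R[X]} (hP : ∀ k, ‖P.coeff k‖ ≤ 1) {y : R⟦X⟧} {m : ℕ}
    (hy : ∀ i < m, ‖coeff i y‖ ≤ 1) : ∀ i < m, ‖coeff i (Polynomial.aeval y P)‖ ≤ 1 := by
  intro i hi
  rw [Polynomial.aeval_eq_sum_range, map_sum]
  refine IsUltrametricDist.norm_sum_le_of_forall_le_of_nonneg zero_le_one fun k _ => ?_
  rw [coeff_smul, smul_eq_mul]
  exact (norm_mul_le _ _).trans
    (mul_le_one₀ (hP k) (norm_nonneg _) (by simpa using norm_coeff_pow_le hy k i hi))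

lemma norm_coeff_hasseDeriv_le_one {Q : R[X]} (hQ : ∀ k, ‖Q.coeff k‖ ≤ 1) (k j : ℕ) :
    ‖(Polynomial.hasseDeriv k Q).coeff j‖ ≤ 1 := by
  rw [Polynomial.hasseDeriv_coeff]
  exact (norm_mul_le _ _).trans
    (mul_le_one₀ (IsUltrametricDist.norm_natCast_le_one R _) (norm_nonneg _) (hQ _))

end Ultrametric

namespace Polynomial

lemma hasseDeriv_map {R S : Type*} [Semiring R] [Semiring S] (φ : R →+* S) (P : R[X]) (k : ℕ) :
    hasseDeriv k (P.map φ) = (hasseDeriv k P).map φ := by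
  ext j
  simp [hasseDeriv_coeff]

lemma succ_smul_hasseDeriv_succ {R : Type*} [Semiring R] (P : R[X]) (k : ℕ) :
    (k + 1) • hasseDeriv (k + 1) P = hasseDeriv k (derivative P) := by
  have := LinearMap.congr_fun (hasseDeriv_comp (R := R) k 1) P
  rw [Nat.choose_succ_self_right, LinearMap.comp_apply, hasseDeriv_one] at this
  exact this.symm

lemma aeval_add_sub_aeval_eq_sum_hasseDeriv {R A : Type*} [CommSemiring R] [CommRing A]
    [Algebra R A] (P : R[X]) (x e : A) {N : ℕ} (hN : P.natDegree ≤ N) :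
    aeval (x + e) P - aeval x P = ∑ k ∈ range N, aeval x (hasseDeriv (k + 1) P) * e ^ (k + 1) := by
  have hdeg : (taylor x (P.map (algebraMap R A))).natDegree < N + 1 := by
    rw [natDegree_taylor]
    exact natDegree_map_le.trans_lt (by omega)
  rw [← eval_map_algebraMap, add_comm, ← taylor_eval, eval_eq_sum_range' hdeg, sum_range_succ',
    ← eval_map_algebraMap]
  simp [taylor_coeff, hasseDeriv_map, eval_map_algebraMap]

end Polynomial

section Field

variable {K : Type*} [NormedField K] [IsUltrametricDist K]

lemma norm_coeff_inv_le_one {h : K⟦X⟧} (hh : constantCoeff h = 1) (hint : ∀ i, ‖coeff i h‖ ≤ 1) :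
    ∀ i, ‖coeff i h⁻¹‖ ≤ 1 := by
  intro i
  induction i using Nat.strong_induction_on with
  | _ i ih =>
    rw [coeff_inv, hh, inv_one]
    split_ifs
    · simp
    rw [neg_one_mul, norm_neg]
    refine IsUltrametricDist.norm_sum_le_of_forall_le_of_nonneg zero_le_one fun x _ => ?_
    split_ifs with hx
    · exact (norm_mul_le _ _).trans (mul_le_one₀ (hint _) (norm_nonneg _) (ih _ hx))
    · simp

lemma norm_coeff_aeval_hasseDeriv_succ_le [CharZero K] {P : K[X]}
    (hP : ∀ k, ‖(Polynomial.derivative P).coeff k‖ ≤ 1) {y : K⟦X⟧} {m : ℕ}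
    (hy : ∀ i < m, ‖coeff i y‖ ≤ 1) (k : ℕ) :
    ∀ i < m, ‖coeff i (Polynomial.aeval y (Polynomial.hasseDeriv (k + 1) P))‖
      ≤ ‖((k + 1 : ℕ) : K)⁻¹‖ := by
  intro i hi
  have hk : ((k + 1 : ℕ) : K) ≠ 0 := Nat.cast_ne_zero.mpr k.succ_ne_zero
  have hT : Polynomial.hasseDeriv (k + 1) P
      = ((k + 1 : ℕ) : K)⁻¹ • Polynomial.hasseDeriv k (Polynomial.derivative P) := by
    rw [← Polynomial.succ_smul_hasseDeriv_succ, ← Nat.cast_smul_eq_nsmul K, inv_smul_smul₀ hk]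
  rw [hT, map_smul, coeff_smul, smul_eq_mul, norm_mul]
  exact mul_le_of_le_one_right (norm_nonneg _)
    (norm_coeff_aeval_le_one (norm_coeff_hasseDeriv_le_one hP k) hy i hi)

end Field

section Padic

variable {p : ℕ} [hp : Fact p.Prime]

lemma norm_natCast_inv_le_pow_log (m : ℕ) : ‖(m : ℚ_[p])⁻¹‖ ≤ (p : ℝ) ^ Nat.log p m := by
  rcases eq_or_ne m 0 with rfl | hm
  · simp
  rw [norm_inv, Padic.norm_eq_zpow_neg_valuation (Nat.cast_ne_zero.mpr hm),
    Padic.valuation_natCast, ← zpow_neg, neg_neg, zpow_natCast]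
  exact pow_le_pow_right₀ (by exact_mod_cast hp.out.one_le) (padicValNat_le_nat_log m)

lemma norm_natCast_inv_mul_pow_le {κ : ℕ} (hκ : 1 ≤ κ) (k : ℕ) :
    ‖(k : ℚ_[p])⁻¹‖ * ((p : ℝ) ^ (-(κ : ℤ))) ^ k ≤ (p : ℝ) ^ (-(κ : ℤ)) := by
  rcases eq_or_ne k 0 with rfl | hk
  · simp
  have hp1 : (1 : ℝ) ≤ p := by exact_mod_cast hp.out.one_le
  have hp0 : (p : ℝ) ≠ 0 := by exact_mod_cast hp.out.ne_zero
  have hlog : Nat.log p k ≤ κ * (k - 1) := by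
    have := Nat.log_lt_self p hk
    exact (show Nat.log p k ≤ k - 1 by omega).trans (Nat.le_mul_of_pos_left _ hκ)
  calc ‖(k : ℚ_[p])⁻¹‖ * ((p : ℝ) ^ (-(κ : ℤ))) ^ k
      ≤ (p : ℝ) ^ Nat.log p k * ((p : ℝ) ^ (-(κ : ℤ))) ^ k := by
        gcongr; exact norm_natCast_inv_le_pow_log k
    _ ≤ (p : ℝ) ^ (κ * (k - 1)) * ((p : ℝ) ^ (-(κ : ℤ))) ^ k := by
        gcongr
    _ = (p : ℝ) ^ (-(κ : ℤ)) := by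
        obtain ⟨k, rfl⟩ := Nat.exists_eq_succ_of_ne_zero hk
        rw [Nat.succ_sub_one, pow_succ, ← mul_assoc, pow_mul, ← mul_pow, ← zpow_natCast (p : ℝ) κ,
          ← zpow_add₀ hp0, add_neg_cancel, zpow_zero, one_pow, one_mul]

lemma norm_coeff_pint_le {f : ℚ_[p]⟦X⟧} {n κ : ℕ}
    (hf : ∀ i < n, ‖coeff i f‖ ≤ (p : ℝ) ^ (-((κ + Nat.log p n : ℕ) : ℤ))) :
    ∀ i ≤ n, ‖coeff i (pint f)‖ ≤ (p : ℝ) ^ (-(κ : ℤ)) := by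
  intro i hi
  rcases eq_or_ne i 0 with rfl | hi0
  · simp [pint]
  rw [pint, coeff_mk, if_neg hi0, div_eq_mul_inv, norm_mul]
  calc ‖coeff (i - 1) f‖ * ‖(i : ℚ_[p])⁻¹‖
      ≤ (p : ℝ) ^ (-((κ + Nat.log p n : ℕ) : ℤ)) * (p : ℝ) ^ Nat.log p n := by
        gcongr
        · exact hf _ (by omega)
        · exact (norm_natCast_inv_le_pow_log i).trans
            (pow_le_pow_right₀ (by exact_mod_cast hp.out.one_le) (Nat.log_mono_right hi))
    _ = (p : ℝ) ^ (-(κ : ℤ)) := by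
        rw [← zpow_natCast, ← zpow_add₀ (by exact_mod_cast hp.out.ne_zero)]
        push_cast
        ring_nf

lemma norm_coeff_mul_pow_le {κ i k : ℕ} (hκ : 1 ≤ κ) {T e : ℚ_[p]⟦X⟧}
    (hT : ∀ j ≤ i, ‖coeff j T‖ ≤ ‖((k + 2 : ℕ) : ℚ_[p])⁻¹‖) (he0 : constantCoeff e = 0)
    (he : ∀ j < i, ‖coeff j e‖ ≤ (p : ℝ) ^ (-(κ : ℤ))) :
    ‖coeff i (T * e ^ (k + 2))‖ ≤ (p : ℝ) ^ (-(κ : ℤ)) := by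
  set c : ℝ := (p : ℝ) ^ (-(κ : ℤ))
  have hc : 0 ≤ c := by positivity
  have hpow : ∀ j ≤ i, ‖coeff j (e ^ (k + 2))‖ ≤ c ^ (k + 2) := by
    rw [pow_succ' e, pow_succ' c]
    exact norm_coeff_mul_le_of_constantCoeff_eq_zero hc (pow_nonneg hc _) he0 (by simp [he0]) he
      (norm_coeff_pow_le he (k + 1))
  calc ‖coeff i (T * e ^ (k + 2))‖ ≤ ‖((k + 2 : ℕ) : ℚ_[p])⁻¹‖ * c ^ (k + 2) :=
        norm_coeff_mul_le (m := i + 1) (fun j hj => hT j (by omega))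
          (fun j hj => hpow j (by omega)) i (by omega)
    _ ≤ c := norm_natCast_inv_mul_pow_le hκ (k + 2)

theorem norm_coeff_le_of_norm_coeff_aeval_add_sub_le {κ m : ℕ} (hκ : 1 ≤ κ) {P : ℚ_[p][X]}
    (hP' : ∀ k, ‖(Polynomial.derivative P).coeff k‖ ≤ 1)
    (hP'0 : (Polynomial.derivative P).coeff 0 = 1) {y e : ℚ_[p]⟦X⟧}
    (hy : ∀ i < m, ‖coeff i y‖ ≤ 1) (hy0 : constantCoeff y = 0) (he0 : constantCoeff e = 0)
    (hP : ∀ i < m,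
      ‖coeff i (Polynomial.aeval (y + e) P - Polynomial.aeval y P)‖ ≤ (p : ℝ) ^ (-(κ : ℤ))) :
    ∀ i < m, ‖coeff i e‖ ≤ (p : ℝ) ^ (-(κ : ℤ)) := by
  set c : ℝ := (p : ℝ) ^ (-(κ : ℤ))
  have hc : 0 ≤ c := by positivity
  set T : ℕ → ℚ_[p]⟦X⟧ := fun k => Polynomial.aeval y (Polynomial.hasseDeriv k P) with hT_def
  have hT : ∀ k, ∀ i < m, ‖coeff i (T (k + 1))‖ ≤ ‖((k + 1 : ℕ) : ℚ_[p])⁻¹‖ :=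
    norm_coeff_aeval_hasseDeriv_succ_le hP' hy
  have hT10 : constantCoeff (T 1 - 1) = 0 := by
    simp [hT_def, constantCoeff_aeval _ hy0, hP'0]
  have hT1 : ∀ i < m, ‖coeff i (T 1 - 1)‖ ≤ 1 := fun i hi => by
    rw [map_sub]
    refine (IsUltrametricDist.norm_sub_le_max _ _).trans (max_le ?_ ?_)
    · simpa using hT 0 i hi
    · rw [coeff_one]; split_ifs <;> simp
  have step : ∀ i < m, (∀ j < i, ‖coeff j e‖ ≤ c) → ‖coeff i e‖ ≤ c := by
    intro i hi he
    have hexp : coeff i (Polynomial.aeval (y + e) P - Polynomial.aeval y P) = coeff i e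
        + coeff i ((T 1 - 1) * e) + ∑ k ∈ range P.natDegree, coeff i (T (k + 2) * e ^ (k + 2)) := by
      rw [Polynomial.aeval_add_sub_aeval_eq_sum_hasseDeriv P y e (Nat.le_succ _), sum_range_succ',
        map_add, map_sum, sub_mul, one_mul, map_sub, pow_one]
      abel
    rw [← sub_eq_iff_eq_add, ← sub_eq_iff_eq_add] at hexp
    rw [← hexp]
    have hlin : ‖coeff i ((T 1 - 1) * e)‖ ≤ c := by
      simpa using norm_coeff_mul_le_of_constantCoeff_eq_zero zero_le_one hc hT10 he0
        (fun j hj => hT1 j (hj.trans hi)) he i le_rfl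
    refine (IsUltrametricDist.norm_sub_le_max _ _).trans (max_le ?_ hlin)
    refine (IsUltrametricDist.norm_sub_le_max _ _).trans (max_le (hP i hi) ?_)
    exact IsUltrametricDist.norm_sum_le_of_forall_le_of_nonneg hc fun k _ =>
      norm_coeff_mul_pow_le hκ (fun j hj => hT (k + 1) j (by omega)) he0 he
  intro i
  induction i using Nat.strong_induction_on with
  | _ i ih => exact fun hi => step i hi fun j hj => ih j hj (hj.trans hi)

end Padic

theorem stmt9_general (p : ℕ) [hp : Fact p.Prime] (n κ : ℕ) (hκ : 1 ≤ κ)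
    (g gbar h : PowerSeries ℚ_[p])
    (hhint : ∀ i, ‖coeff i h‖ ≤ 1) (hh1 : constantCoeff h = 1)
    (y ybar : PowerSeries ℚ_[p])
    (hy0 : constantCoeff y = 0) (hy : derivativeFun y = g * pcomp h y)
    (hybar0 : constantCoeff ybar = 0) (hybar : derivativeFun ybar = gbar * pcomp h ybar)
    (hyint : ∀ i ≤ n, ‖coeff i y‖ ≤ 1)
    (hdiff : ∀ i < n,
      ‖coeff i (gbar - g)‖ ≤ (p : ℝ) ^ (-((κ + Nat.log p n : ℕ) : ℤ))) :
    ∀ i ≤ n, ‖coeff i (ybar - y)‖ ≤ (p : ℝ) ^ (-(κ : ℤ)) := by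
  have hh : constantCoeff h ≠ 0 := by simp [hh1]
  have hsol : (pint h⁻¹).subst ybar - (pint h⁻¹).subst y = pint (gbar - g) := by
    rw [pint_sub, subst_pint_inv_eq_pint hh hy0 (by rw [← pcomp_eq_subst h hy0]; exact hy),
      subst_pint_inv_eq_pint hh hybar0 (by rw [← pcomp_eq_subst h hybar0]; exact hybar)]
  have hderiv : Polynomial.derivative (trunc (n + 2) (pint h⁻¹)) = trunc (n + 1) h⁻¹ := by
    rw [← trunc_derivative, derivative_pint]
  intro i hi
  refine norm_coeff_le_of_norm_coeff_aeval_add_sub_le hκ (P := trunc (n + 2) (pint h⁻¹))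
    (m := n + 1) ?_ ?_ (fun j hj => hyint j (by omega)) hy0 (by simp [hy0, hybar0]) ?_ i (by omega)
  · intro k
    rw [hderiv, coeff_trunc]
    split_ifs
    · exact norm_coeff_inv_le_one hh1 hhint k
    · simp
  · rw [hderiv, coeff_trunc, if_pos (by omega), coeff_zero_eq_constantCoeff, constantCoeff_inv, hh1,
      inv_one]
  · intro j hj
    rw [add_sub_cancel, map_sub, ← coeff_subst_eq_coeff_aeval_trunc _ hybar0 (by omega),
      ← coeff_subst_eq_coeff_aeval_trunc _ hy0 (by omega), ← map_sub, hsol]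
    exact norm_coeff_pint_le hdiff j (by omega)

/-- stability of the solution `Y(g)` under perturbation of `g` modulo
`(p^λ, t^n)` with `λ = κ + ⌊log_p n⌋`: the solutions agree modulo `(p^κ, t^{n+1})`.
Membership `x ∈ p^κ ℤ_p` is expressed as `‖x‖ ≤ p^{-κ}`, and `f ∈ ℤ_p⟦t⟧` as
`‖coeff i f‖ ≤ 1` for all `i`. -/
theorem stmt9 (p : ℕ) [hp : Fact p.Prime] (n κ : ℕ) (hn : 1 ≤ n) (hκ : 1 ≤ κ)
    (hκ2 : p = 2 → 2 ≤ κ)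
    (g gbar h : PowerSeries ℚ_[p])
    (hg : ∀ i, ‖coeff i g‖ ≤ 1) (hgbar : ∀ i, ‖coeff i gbar‖ ≤ 1)
    (hhint : ∀ i, ‖coeff i h‖ ≤ 1) (hh1 : constantCoeff h = 1)
    (y ybar : PowerSeries ℚ_[p])
    (hy0 : constantCoeff y = 0) (hy : derivativeFun y = g * pcomp h y)
    (hybar0 : constantCoeff ybar = 0) (hybar : derivativeFun ybar = gbar * pcomp h ybar)
    (hyint : ∀ i ≤ n, ‖coeff i y‖ ≤ 1)
    (hdiff : ∀ i < n,
      ‖coeff i (gbar - g)‖ ≤ (p : ℝ) ^ (-((κ + Nat.log p n : ℕ) : ℤ)))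
    (heq : ∀ i ≥ n, coeff i gbar = coeff i g) :
    ∀ i ≤ n, ‖coeff i (ybar - y)‖ ≤ (p : ℝ) ^ (-(κ : ℤ)) :=
  stmt9_general p (hp := hp) n κ hκ g gbar h hhint hh1 y ybar hy0 hy hybar0 hybar hyint hdiff
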